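/- A firm's cumulative utility U_i(p^i) = Σ_{t=1}^T (D_t^i - p_t^i)(p_t^i - c_i), viewed as a function of its own price vector p^i ∈ ℝ^T with rivals' prices fixed and demands given by the linear recursion, is strictly concave in p^i. -/

import Mathlib

/-!
Demand is affine in the firm's own prices, with `D_t(x) - D_t(y) = -α Σ_{i<t} (x_i - y_i)` for
`α = 1 - 1/N`. Each summand of the utility is a product of two affine functions, so
`U(a x + b y) - a U(x) - b U(y) = a b Q(x - y)` with `Q(v) = Σ_t v_t (v_t + α Σ_{i<t} v_i)`.
Since `2 Σ_t v_t Σ_{i<t} v_i = (Σ v)² - Σ v²`, we get `2 Q(v) = (2 - α) Σ v² + α (Σ v)²`,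
which is positive definite because `0 ≤ α ≤ 1`.
-/

/-- Firm `i`'s demand path as a function of its own price vector `p : Fin T → ℝ`,
with rivals' total prices `s : ℕ → ℝ` held fixed:
`D_0 = D1`, `D_{t+1} = D_t - p_t + (p_t + s_t)/N` (for `t < T`). -/
noncomputable def ownDemandFin (N T : ℕ) (D1 : ℝ) (s : ℕ → ℝ) (p : Fin T → ℝ) : ℕ → ℝ
  | 0 => D1
  | t + 1 =>
      let P : ℝ := if h : t < T then p ⟨t, h⟩ else 0
      ownDemandFin N T D1 s p t - P + (P + s t) / (N : ℝ)

open Finset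

theorem StrictConcaveOn.of_combo_eq_add_mul {E : Type*} [AddCommGroup E] [Module ℝ E]
    {f q : E → ℝ} (hq : ∀ v ≠ 0, 0 < q v)
    (hf : ∀ x y : E, ∀ a b : ℝ, a + b = 1 →
      f (a • x + b • y) = a * f x + b * f y + a * b * q (x - y)) :
    StrictConcaveOn ℝ Set.univ f := by
  refine ⟨convex_univ, fun x _ y _ hxy a b ha hb hab => ?_⟩
  rw [hf x y a b hab, smul_eq_mul, smul_eq_mul]
  have := mul_pos (mul_pos ha hb) (hq _ (sub_ne_zero.2 hxy))
  linarith

theorem two_mul_sum_mul_sum_range (w : ℕ → ℝ) (n : ℕ) :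
    2 * ∑ t ∈ range n, w t * ∑ i ∈ range t, w i
      = (∑ t ∈ range n, w t) ^ 2 - ∑ t ∈ range n, w t ^ 2 := by
  induction n with
  | zero => simp
  | succ n ih =>
    simp only [sum_range_succ]
    linear_combination ih

theorem sum_mul_add_mul_sum_range_pos {α : ℝ} (hα₀ : 0 ≤ α) (hα₂ : α < 2) {w : ℕ → ℝ}
    {n t : ℕ} (ht : t < n) (hwt : w t ≠ 0) :
    0 < ∑ t ∈ range n, w t * (w t + α * ∑ i ∈ range t, w i) := by
  have hsq : 0 < ∑ t ∈ range n, w t ^ 2 :=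
    sum_pos' (fun _ _ => sq_nonneg _) ⟨t, mem_range.2 ht, by positivity⟩
  have hcross := two_mul_sum_mul_sum_range w n
  simp only [mul_add, sum_add_distrib, mul_left_comm _ α, ← mul_sum, ← sq]
  nlinarith [sq_nonneg (∑ t ∈ range n, w t)]

noncomputable def zeroExtend {T : ℕ} (p : Fin T → ℝ) (i : ℕ) : ℝ :=
  if h : i < T then p ⟨i, h⟩ else 0

@[simp]
theorem zeroExtend_val {T : ℕ} (p : Fin T → ℝ) (t : Fin T) : zeroExtend p t = p t := by
  simp [zeroExtend]

theorem zeroExtend_sub {T : ℕ} (x y : Fin T → ℝ) (i : ℕ) :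
    zeroExtend (x - y) i = zeroExtend x i - zeroExtend y i := by
  unfold zeroExtend; split_ifs <;> simp

theorem zeroExtend_combo {T : ℕ} (x y : Fin T → ℝ) (a b : ℝ) (i : ℕ) :
    zeroExtend (a • x + b • y) i = a * zeroExtend x i + b * zeroExtend y i := by
  unfold zeroExtend; split_ifs <;> simp

section Demand

variable {N T : ℕ} {D1 : ℝ} {s : ℕ → ℝ}

theorem ownDemandFin_succ (p : Fin T → ℝ) (t : ℕ) :
    ownDemandFin N T D1 s p (t + 1)
      = ownDemandFin N T D1 s p t - zeroExtend p t + (zeroExtend p t + s t) / N :=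
  rfl

theorem ownDemandFin_combo {a b : ℝ} (hab : a + b = 1) (x y : Fin T → ℝ) (t : ℕ) :
    ownDemandFin N T D1 s (a • x + b • y) t
      = a * ownDemandFin N T D1 s x t + b * ownDemandFin N T D1 s y t := by
  induction t with
  | zero => simp only [ownDemandFin]; linear_combination -D1 * hab
  | succ t ih =>
    simp only [ownDemandFin_succ, zeroExtend_combo, ih]
    linear_combination (-(s t) / N) * hab

theorem ownDemandFin_sub (x y : Fin T → ℝ) (t : ℕ) :
    ownDemandFin N T D1 s x t - ownDemandFin N T D1 s y t
      = -(1 - (N : ℝ)⁻¹) * ∑ i ∈ range t, zeroExtend (x - y) i := by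
  induction t with
  | zero => simp [ownDemandFin]
  | succ t ih =>
    simp only [ownDemandFin_succ, sum_range_succ, zeroExtend_sub] at ih ⊢
    linear_combination ih

end Demand

noncomputable def ownUtility (N T : ℕ) (D1 c : ℝ) (s : ℕ → ℝ) (p : Fin T → ℝ) : ℝ :=
  ∑ t : Fin T, (ownDemandFin N T D1 s p t - p t) * (p t - c)

theorem ownUtility_combo {N T : ℕ} {D1 c : ℝ} {s : ℕ → ℝ} {a b : ℝ} (hab : a + b = 1)
    (x y : Fin T → ℝ) :
    ownUtility N T D1 c s (a • x + b • y)
      = a * ownUtility N T D1 c s x + b * ownUtility N T D1 c s y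
        + a * b * ∑ t : Fin T, (x - y) t *
            ((x - y) t + (1 - (N : ℝ)⁻¹) * ∑ i ∈ range t, zeroExtend (x - y) i) := by
  simp only [ownUtility, mul_sum (a := a), mul_sum (a := b), mul_sum (a := a * b),
    ← sum_add_distrib]
  refine sum_congr rfl fun t _ => ?_
  have hΔ := ownDemandFin_sub (N := N) (D1 := D1) (s := s) x y t
  obtain rfl : b = 1 - a := by linarith
  simp only [ownDemandFin_combo hab, Pi.add_apply, Pi.smul_apply, Pi.sub_apply, smul_eq_mul]
  linear_combination -(a * (1 - a) * (x t - y t)) * hΔ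

theorem sum_mul_add_mul_sum_zeroExtend_pos {T : ℕ} {α : ℝ} (hα₀ : 0 ≤ α) (hα₂ : α < 2)
    {v : Fin T → ℝ} (hv : v ≠ 0) :
    0 < ∑ t : Fin T, v t * (v t + α * ∑ i ∈ range t, zeroExtend v i) := by
  obtain ⟨t, ht⟩ := Function.ne_iff.1 hv
  simp_rw [← zeroExtend_val v]
  rw [Fin.sum_univ_eq_sum_range (fun t => zeroExtend v t * (zeroExtend v t
    + α * ∑ i ∈ range t, zeroExtend v i))]
  exact sum_mul_add_mul_sum_range_pos hα₀ hα₂ t.isLt (by simpa using ht)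

theorem utility_strictly_concave_general (N T : ℕ)
    (D1 c : ℝ) (s : ℕ → ℝ) :
    StrictConcaveOn ℝ Set.univ
      (fun p : Fin T → ℝ =>
        ∑ t : Fin T, (ownDemandFin N T D1 s p t - p t) * (p t - c)) := by
  have hα₀ : 0 ≤ 1 - (N : ℝ)⁻¹ := sub_nonneg.2 (Nat.cast_inv_le_one N)
  have hα₂ : 1 - (N : ℝ)⁻¹ < 2 := by linarith [inv_nonneg.2 (N.cast_nonneg (α := ℝ))]
  exact StrictConcaveOn.of_combo_eq_add_mul
    (fun v hv => sum_mul_add_mul_sum_zeroExtend_pos hα₀ hα₂ hv)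
    (fun x y a b hab => ownUtility_combo hab x y)

/-- The cumulative utility `U_i(p^i) = Σ_t (D_t^i - p_t^i)(p_t^i - c_i)` is
strictly concave in the firm's own price vector. -/
theorem utility_strictly_concave (N T : ℕ) (hN : 1 ≤ N) (hT : 1 ≤ T)
    (D1 c : ℝ) (s : ℕ → ℝ) :
    StrictConcaveOn ℝ Set.univ
      (fun p : Fin T → ℝ =>
        ∑ t : Fin T, (ownDemandFin N T D1 s p t - p t) * (p t - c)) :=
  utility_strictly_concave_general N T D1 c s
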